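/- Let X be square-integrable and G a sub-σ-algebra. If U, V satisfy E[U|G] = E[V|G] = E[X|G], are conditionally independent given G, and each has marginal law equal to that of some W with E[W] = E[X], then E[UV] − (E[X])² = Var(E[X|G]) and hence 0 ≤ Cov(U,V) ≤ Var(X). -/

import Mathlib

open MeasureTheory ProbabilityTheory

/-!
Conditioning on `G` turns `E[UV]` into `E[E[U|G] E[V|G]] = E[E[X|G]²]`, while `E[U] = E[V] = E[X]`
by the tower property; so `Cov(U,V) = Var(E[X|G])`, which is nonnegative and, by the law of total
variance, at most `Var(X)`.
-/

section

variable {Ω : Type*} {m m₀ : MeasurableSpace Ω} {μ : Measure Ω}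

lemma integral_eq_of_condExp_ae_eq (hm : m ≤ m₀) [SigmaFinite (μ.trim hm)] {U X : Ω → ℝ}
    (h : μ[U|m] =ᵐ[μ] μ[X|m]) : ∫ ω, U ω ∂μ = ∫ ω, X ω ∂μ := by
  rw [← integral_condExp hm, integral_congr_ae h, integral_condExp hm]

lemma integral_mul_eq_integral_condExp_sq (hm : m ≤ m₀) [SigmaFinite (μ.trim hm)]
    {U V X : Ω → ℝ} (hUX : μ[U|m] =ᵐ[μ] μ[X|m]) (hVX : μ[V|m] =ᵐ[μ] μ[X|m])
    (hUV : μ[fun ω => U ω * V ω|m] =ᵐ[μ] fun ω => (μ[U|m]) ω * (μ[V|m]) ω) :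
    ∫ ω, U ω * V ω ∂μ = ∫ ω, (μ[X|m]) ω ^ 2 ∂μ := by
  rw [← integral_condExp hm]
  refine integral_congr_ae ?_
  filter_upwards [hUV, hUX, hVX] with ω hω hUω hVω
  rw [hω, hUω, hVω, sq]

lemma variance_condExp_le (hm : m ≤ m₀) [IsProbabilityMeasure μ] {X : Ω → ℝ}
    (hX : MemLp X 2 μ) : Var[μ[X|m]; μ] ≤ Var[X; μ] := by
  have hcondVar : 0 ≤ ∫ ω, Var[X; μ | m] ω ∂μ := by
    rw [condVar, integral_condExp hm]
    exact integral_nonneg fun ω => sq_nonneg _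
  linarith [integral_condVar_add_variance_condExp hm hX]

end

theorem cov_eq_var_condexp_and_bounds_general {Ω : Type*} {F : MeasurableSpace Ω}
    (μ : Measure Ω) [IsProbabilityMeasure μ]
    (G : MeasurableSpace Ω) (hG : G ≤ F)
    (X U V : Ω → ℝ) (hX : MemLp X 2 μ)
    (hUX : condExp G μ U =ᵐ[μ] condExp G μ X)
    (hVX : condExp G μ V =ᵐ[μ] condExp G μ X)
    (hcondindep : condExp G μ (fun ω => U ω * V ω) =ᵐ[μ]
      fun ω => condExp G μ U ω * condExp G μ V ω) :
    (∫ ω, U ω * V ω ∂μ) - (∫ ω, X ω ∂μ) ^ 2 = variance (condExp G μ X) μ ∧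
      0 ≤ (∫ ω, U ω * V ω ∂μ) - (∫ ω, U ω ∂μ) * (∫ ω, V ω ∂μ) ∧
      (∫ ω, U ω * V ω ∂μ) - (∫ ω, U ω ∂μ) * (∫ ω, V ω ∂μ) ≤ variance X μ := by
  have hcov : (∫ ω, U ω * V ω ∂μ) - (∫ ω, X ω ∂μ) ^ 2 = variance (condExp G μ X) μ := by
    rw [variance_eq_sub (hX.condExp one_le_two), integral_condExp hG,
      integral_mul_eq_integral_condExp_sq hG hUX hVX hcondindep]
    rfl
  rw [integral_eq_of_condExp_ae_eq hG hUX, integral_eq_of_condExp_ae_eq hG hVX, ← sq, hcov]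
  exact ⟨rfl, variance_nonneg _ _, variance_condExp_le hG hX⟩

/-- If `E[U|G] = E[V|G] = E[X|G]` a.s., `U` and `V` are conditionally independent given `G`,
and each has the marginal law of some `W` with `E[W] = E[X]`, then
`E[UV] − (E[X])² = Var(E[X|G])`, hence `0 ≤ Cov(U,V) ≤ Var(X)`. -/
theorem cov_eq_var_condexp_and_bounds {Ω : Type*} {F : MeasurableSpace Ω}
    (μ : Measure Ω) [IsProbabilityMeasure μ]
    (G : MeasurableSpace Ω) (hG : G ≤ F)
    (X U V W : Ω → ℝ) (hX : MemLp X 2 μ)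
    (hU : MemLp U 2 μ) (hV : MemLp V 2 μ) (hW : MemLp W 2 μ)
    (hUX : condExp G μ U =ᵐ[μ] condExp G μ X)
    (hVX : condExp G μ V =ᵐ[μ] condExp G μ X)
    (hcondindep : condExp G μ (fun ω => U ω * V ω) =ᵐ[μ]
      fun ω => condExp G μ U ω * condExp G μ V ω)
    (hlawU : @Measure.map Ω ℝ F Real.measurableSpace U μ
      = @Measure.map Ω ℝ F Real.measurableSpace W μ)
    (hlawV : @Measure.map Ω ℝ F Real.measurableSpace V μ
      = @Measure.map Ω ℝ F Real.measurableSpace W μ)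
    (hWX : ∫ ω, W ω ∂μ = ∫ ω, X ω ∂μ) :
    (∫ ω, U ω * V ω ∂μ) - (∫ ω, X ω ∂μ) ^ 2 = variance (condExp G μ X) μ ∧
      0 ≤ (∫ ω, U ω * V ω ∂μ) - (∫ ω, U ω ∂μ) * (∫ ω, V ω ∂μ) ∧
      (∫ ω, U ω * V ω ∂μ) - (∫ ω, U ω ∂μ) * (∫ ω, V ω ∂μ) ≤ variance X μ :=
  cov_eq_var_condexp_and_bounds_general μ G hG X U V hX hUX hVX hcondindep
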